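/- arXiv:1603.02100 — 3 statements merged into one kernel-verified Lean document; each statement's English description precedes it below -/
import Mathlib

section
/- If α + 1 < θ₁ and 0 < ξ < ρ·ω, then α + ξ < θ₁, κ_{α+ξ} = max₁(κ_α) + ξ, and max₁(κ_{α+ξ}) = κ_{α+ξ} (here max₁(κ_α) is an ordinal since α + 1 < θ₁). -/
open Ordinal Set

/-- `ρ` is additively indecomposable: nonzero and closed under addition. -/
def AddIndec (ρ : Ordinal) : Prop :=
  ρ ≠ 0 ∧ ∀ ξ < ρ, ∀ η < ρ, ξ + η < ρ

/-- `σ` is divisible by `ρ`, i.e. of the form `ρ·ζ`. -/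
def DivBy (ρ σ : Ordinal) : Prop := ∃ ζ : Ordinal, σ = ρ * ζ

/-- The function `f_ξ` of the structure `R^ρ`. -/
noncomputable def fApp (ρ ξ α : Ordinal) : Ordinal :=
  if α % ρ = 0 then α + ξ else ρ * (α / ρ)

/-- A set of ordinals is closed (with respect to `R^ρ`). -/
def RClosed (ρ : Ordinal) (X : Set Ordinal) : Prop :=
  ∀ σ ξ : Ordinal, DivBy ρ σ → ξ < ρ → σ + ξ ∈ X → σ ∈ X

/-- `h` is an embedding of `X` (as a substructure of `R^ρ`) into `R^ρ`. -/
def IsEmbed (ρ : Ordinal) (X : Set Ordinal) (h : Ordinal → Ordinal) : Prop :=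
  (∀ α ∈ X, ∀ β ∈ X, α < β → h α < h β) ∧
  (∀ α ∈ X, ∀ β ∈ X, ∀ ξ, ξ < ρ → (fApp ρ ξ α = β ↔ fApp ρ ξ (h α) = h β))

/-- `Y` is a covering of `Z` (relative to relations `le1`, `le2`). -/
def IsCovering (ρ : Ordinal) (le1 le2 : Ordinal → Ordinal → Prop)
    (Z Y : Set Ordinal) : Prop :=
  ∃ h : Ordinal → Ordinal, IsEmbed ρ Z h ∧
    (∀ σ ∈ Z, ∀ τ ∈ Z, (le1 σ τ → le1 (h σ) (h τ)) ∧ (le2 σ τ → le2 (h σ) (h τ))) ∧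
    h '' Z = Y

/-- The `i`-th element of a finite set of ordinals, in increasing order. -/
noncomputable def nth (Y : Finset Ordinal) (i : ℕ) : Ordinal :=
  (Y.sort (· ≤ ·)).getD i 0

/-- There are cofinally many finite sets `Ỹ` below `α` with property `P`. -/
def Cofinally (α : Ordinal) (P : Finset Ordinal → Prop) : Prop :=
  ∀ α' < α, ∃ Yt : Finset Ordinal, (∀ y ∈ Yt, α' < y ∧ y < α) ∧ P Yt

/-- The defining condition for `α ≤₁ β`. -/
def Le1Def (ρ : Ordinal) (le1 le2 : Ordinal → Ordinal → Prop) (α β : Ordinal) : Prop :=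
  α ≤ β ∧
  ∀ X Y : Finset Ordinal, (∀ x ∈ X, x < α) → (∀ y ∈ Y, α ≤ y ∧ y < β) →
    RClosed ρ (↑(X ∪ Y) : Set Ordinal) →
    ∃ Yt : Finset Ordinal, (∀ y ∈ Yt, y < α) ∧ (∀ x ∈ X, ∀ y ∈ Yt, x < y) ∧
      IsCovering ρ le1 le2 (↑(X ∪ Y) : Set Ordinal) (↑(X ∪ Yt) : Set Ordinal)

/-- The defining condition for `α ≤₂ β`. -/
def Le2Def (ρ : Ordinal) (le1 le2 : Ordinal → Ordinal → Prop) (α β : Ordinal) : Prop :=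
  α ≤ β ∧
  (∀ X Y : Finset Ordinal, (∀ x ∈ X, x < α) → (∀ y ∈ Y, y < α) →
    RClosed ρ (↑X : Set Ordinal) → RClosed ρ (↑Y : Set Ordinal) →
    (∀ x ∈ X, ∀ y ∈ Y, x < y) →
    Cofinally α (fun Yt => IsCovering ρ le1 le2 (↑(X ∪ Y) : Set Ordinal) (↑(X ∪ Yt) : Set Ordinal)) →
    Cofinally β (fun Yt => IsCovering ρ le1 le2 (↑(X ∪ Y) : Set Ordinal) (↑(X ∪ Yt) : Set Ordinal))) ∧
  (∀ X Y : Finset Ordinal, (∀ x ∈ X, x < α) → (∀ y ∈ Y, α ≤ y ∧ y < β) →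
    RClosed ρ (↑(X ∪ Y) : Set Ordinal) →
    ∃ Yt : Finset Ordinal, (∀ y ∈ Yt, y < α) ∧ (∀ x ∈ X, ∀ y ∈ Yt, x < y) ∧
      IsCovering ρ le1 le2 (↑(X ∪ Y) : Set Ordinal) (↑(X ∪ Yt) : Set Ordinal) ∧
      ∀ i : ℕ, i < Y.card → le1 (nth Y i) β → le1 (nth Yt i) α)

/-- `le1`, `le2` satisfy the recursive definitions of `≤₁` and `≤₂` of `R₂^ρ`. -/
def R2System (ρ : Ordinal) (le1 le2 : Ordinal → Ordinal → Prop) : Prop :=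
  (∀ α β, le1 α β ↔ Le1Def ρ le1 le2 α β) ∧
  (∀ α β, le2 α β ↔ Le2Def ρ le1 le2 α β)

/-- Isomorphism of two classes of ordinals as substructures of `R₂^ρ`. -/
def OrdIso (ρ : Ordinal) (le1 le2 : Ordinal → Ordinal → Prop) (A B : Set Ordinal) : Prop :=
  ∃ g : Ordinal → Ordinal, Set.BijOn g A B ∧
    (∀ σ ∈ A, ∀ τ ∈ A, (σ < τ ↔ g σ < g τ)) ∧
    (∀ σ ∈ A, ∀ τ ∈ A, ∀ ξ, ξ < ρ → (fApp ρ ξ σ = τ ↔ fApp ρ ξ (g σ) = g τ)) ∧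
    (∀ σ ∈ A, ∀ τ ∈ A, (le1 σ τ ↔ le1 (g σ) (g τ)) ∧ (le2 σ τ ↔ le2 (g σ) (g τ)))

/-- `κ` is `≤₁`-minimal. -/
def Min1 (le1 : Ordinal → Ordinal → Prop) (κ : Ordinal) : Prop :=
  ∀ ξ < κ, ¬ le1 ξ κ

/-- `(dom, f)` is the increasing enumeration of the class `S` of ordinals:
`dom` is a downward-closed class of indices and `f` restricted to `dom` is the
order isomorphism onto `S`. -/
def Enumerates (S : Set Ordinal) (dom : Ordinal → Prop) (f : Ordinal → Ordinal) : Prop :=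
  (∀ a b : Ordinal, dom a → b < a → dom b) ∧
  (∀ a b : Ordinal, dom b → a < b → f a < f b) ∧
  (∀ a : Ordinal, dom a → f a ∈ S) ∧
  (∀ x ∈ S, ∃ a, dom a ∧ f a = x)

/-- `l` is a limit point of the class `C` of ordinals. -/
def LimPt (C : Set Ordinal) (l : Ordinal) : Prop :=
  l ≠ 0 ∧ ∀ γ < l, ∃ δ ∈ C, γ < δ ∧ δ < l

/-- The class `C` of ordinals is topologically closed. -/
def TopClosed (C : Set Ordinal) : Prop := ∀ l, LimPt C l → l ∈ C

/-- The class `C` of ordinals is an interval. -/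
def IsInterval (C : Set Ordinal) : Prop :=
  ∀ σ τ υ : Ordinal, σ ∈ C → υ ∈ C → σ ≤ τ → τ ≤ υ → τ ∈ C

open Classical in
/-- The closure `J̄_ξ` of the `ξ`-th component of `I_α` with respect to `≤₂`,
given the enumeration `(dom₂, ν)` of the `≤₂`-minimal multiples of `κ_α` in `I_α`. -/
noncomputable def Jbar (le1 : Ordinal → Ordinal → Prop) (κα : Ordinal)
    (dom₂ : Ordinal → Prop) (ν : Ordinal → Ordinal) (ξ : Ordinal) : Set Ordinal :=
  if dom₂ (ξ + 1) then Set.Icc (ν ξ) (ν (ξ + 1))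
  else {δ | le1 κα δ} ∩ Set.Ici (ν ξ)

/-!
Let `M = max₁(κ_α)`; it exists because `κ_α ≤₁ δ` forces `δ < κ_{α+1}`. If `a <₁ b`, then `a`
is a multiple of `ρ·ω`: otherwise, with `x₀ = ρ·(a/ρ)` if `ρ ∤ a` and `x₀ = ρ·d` if
`a = ρ·(d+1)`, a covering of `{x₀, a}` would move `a` strictly between `x₀` and `a`, which
the functions `f_ξ` forbid. So no `x ∈ (M, M + ρ·ω)` satisfies `x <₁ y`.
Hence every `M + η` with `0 < η < ρ·ω` is `≤₁`-minimal, while no ordinal in `(κ_α, M]` is,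
so the enumeration continues as `κ_{α+η} = M + η`.
-/

namespace Ordinal

lemma mul_div_add_of_dvd {ρ σ ξ : Ordinal} (hσ : ρ ∣ σ) (hξ : ξ < ρ) :
    ρ * ((σ + ξ) / ρ) = σ := by
  obtain ⟨ζ, rfl⟩ := hσ
  rw [mul_add_div ζ (pos_of_gt hξ).ne', div_eq_zero_of_lt hξ, add_zero]

lemma not_dvd_add_of_isPrincipal {L m η : Ordinal} (hL : IsPrincipal (· + ·) L)
    (h0 : 0 < η) (hη : η < L) : ¬ L ∣ m + η := by
  have hr : m % L < L := mod_lt m (pos_of_gt hη).ne'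
  rw [dvd_iff_mod_eq_zero, ← div_add_mod m L, add_assoc, mul_add_mod_self,
    mod_eq_of_lt (hL hr hη)]
  exact (h0.trans_le le_add_self).ne'

lemma isPrincipal_add_mul_omega0 {ρ : Ordinal} (hρ : AddIndec ρ) :
    IsPrincipal (· + ·) (ρ * ω) := by
  obtain ⟨γ, rfl⟩ := (isPrincipal_add_iff_zero_or_omega0_opow.1
    fun a b ha hb => hρ.2 a ha b hb).resolve_left hρ.1
  rw [← opow_succ]
  exact isPrincipal_add_omega0_opow _

end Ordinal

open Ordinal

section Structure

variable {ρ ξ α : Ordinal}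

lemma RClosed.of_mul_div_mem {X : Set Ordinal} (h : ∀ x ∈ X, ρ * (x / ρ) ∈ X) :
    RClosed ρ X :=
  fun _ _ hσ hξ hx => mul_div_add_of_dvd hσ hξ ▸ h _ hx

lemma fApp_of_dvd (h : ρ ∣ α) : fApp ρ ξ α = α + ξ :=
  if_pos (dvd_iff_mod_eq_zero.1 h)

lemma fApp_mul_div_mod : fApp ρ (α % ρ) (ρ * (α / ρ)) = α := by
  rw [fApp_of_dvd (dvd_mul_right _ _), div_add_mod]

lemma fApp_zero_eq_self_iff : fApp ρ 0 α = α ↔ ρ ∣ α := by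
  rw [dvd_iff_mod_eq_zero, fApp]
  split_ifs with h
  · simp [h]
  · refine iff_of_false (fun he => h ?_) h
    have := div_add_mod α ρ
    rw [he] at this
    simpa using this

variable {X : Set Ordinal} {h : Ordinal → Ordinal}

lemma IsEmbed.dvd_iff (hρ : ρ ≠ 0) (hh : IsEmbed ρ X h) (hα : α ∈ X) :
    ρ ∣ h α ↔ ρ ∣ α := by
  rw [← fApp_zero_eq_self_iff, ← fApp_zero_eq_self_iff]
  exact (hh.2 α hα α hα 0 (pos_iff_ne_zero.2 hρ)).symm

lemma IsEmbed.rclosed_image (hρ : ρ ≠ 0) (hh : IsEmbed ρ X h) (hX : RClosed ρ X) :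
    RClosed ρ (h '' X) := by
  rintro σ ξ hσ hξ ⟨τ, hτ, hτσ⟩
  have hβ : ρ * (τ / ρ) ∈ X :=
    hX _ (τ % ρ) (dvd_mul_right _ _) (mod_lt τ hρ) (by rwa [div_add_mod])
  have hhβ : ρ ∣ h (ρ * (τ / ρ)) := (hh.dvd_iff hρ hβ).2 (dvd_mul_right _ _)
  have hhτ : h (ρ * (τ / ρ)) + τ % ρ = h τ := by
    rw [← fApp_of_dvd hhβ]
    exact (hh.2 _ hβ τ hτ _ (mod_lt τ hρ)).1 fApp_mul_div_mod
  refine ⟨_, hβ, ?_⟩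
  rw [← mul_div_add_of_dvd hhβ (mod_lt τ hρ), hhτ, hτσ, mul_div_add_of_dvd hσ hξ]

variable {le1 le2 : Ordinal → Ordinal → Prop} {Z Y W : Set Ordinal}

lemma IsCovering.refl (Z : Set Ordinal) : IsCovering ρ le1 le2 Z Z :=
  ⟨id, ⟨fun _ _ _ _ h => h, fun _ _ _ _ _ _ => Iff.rfl⟩, fun _ _ _ _ => ⟨id, id⟩, image_id Z⟩

lemma IsCovering.trans (hZY : IsCovering ρ le1 le2 Z Y) (hYW : IsCovering ρ le1 le2 Y W) :
    IsCovering ρ le1 le2 Z W := by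
  obtain ⟨g, ⟨gmono, gf⟩, gle, rfl⟩ := hZY
  obtain ⟨h, ⟨hmono, hf⟩, hle, rfl⟩ := hYW
  have hg : ∀ σ ∈ Z, g σ ∈ g '' Z := fun σ hσ => mem_image_of_mem g hσ
  refine ⟨h ∘ g, ⟨fun σ hσ τ hτ hlt => ?_, fun σ hσ τ hτ ξ hξ => ?_⟩,
    fun σ hσ τ hτ => ⟨fun H => ?_, fun H => ?_⟩, image_comp h g Z⟩
  · exact hmono _ (hg σ hσ) _ (hg τ hτ) (gmono σ hσ τ hτ hlt)
  · exact (gf σ hσ τ hτ ξ hξ).trans (hf _ (hg σ hσ) _ (hg τ hτ) ξ hξ)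
  · exact (hle _ (hg σ hσ) _ (hg τ hτ)).1 ((gle σ hσ τ hτ).1 H)
  · exact (hle _ (hg σ hσ) _ (hg τ hτ)).2 ((gle σ hσ τ hτ).2 H)

lemma IsCovering.rclosed (hρ : ρ ≠ 0) (hZY : IsCovering ρ le1 le2 Z Y) (hZ : RClosed ρ Z) :
    RClosed ρ Y := by
  obtain ⟨h, hh, -, rfl⟩ := hZY
  exact hh.rclosed_image hρ hZ

end Structure

/-- The covering clause of `a ≤₁ b`, stated for the whole finite set `Z = X ∪ Y`, where
`X = Z ∩ a` is the part to be kept fixed. -/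
def CoversBelow (ρ : Ordinal) (le1 le2 : Ordinal → Ordinal → Prop) (a b : Ordinal) : Prop :=
  ∀ Z : Finset Ordinal, (∀ z ∈ Z, z < b) → RClosed ρ ↑Z →
    ∃ Yt : Finset Ordinal, (∀ y ∈ Yt, y < a) ∧ (∀ x ∈ Z, x < a → ∀ y ∈ Yt, x < y) ∧
      IsCovering ρ le1 le2 ↑Z ↑(Z.filter (· < a) ∪ Yt)

section Le1

variable {ρ : Ordinal} {le1 le2 : Ordinal → Ordinal → Prop}
  (hle1 : ∀ α β, le1 α β ↔ Le1Def ρ le1 le2 α β) {a b c x y M κ η : Ordinal}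
include hle1

lemma le1_iff_coversBelow : le1 a b ↔ a ≤ b ∧ CoversBelow ρ le1 le2 a b := by
  rw [hle1]
  refine and_congr_right fun hab => ⟨fun h Z hZ hcl => ?_, fun h X Y hX hY hcl => ?_⟩
  · obtain ⟨Yt, hYt, hXYt, hcov⟩ := h (Z.filter (· < a)) (Z.filter (¬ · < a))
      (fun x hx => (Finset.mem_filter.1 hx).2)
      (fun y hy => ⟨not_lt.1 (Finset.mem_filter.1 hy).2, hZ y (Finset.mem_filter.1 hy).1⟩)
      (by rwa [Finset.filter_union_filter_not_eq])
    rw [Finset.filter_union_filter_not_eq] at hcov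
    exact ⟨Yt, hYt, fun x hx hxa => hXYt x (Finset.mem_filter.2 ⟨hx, hxa⟩), hcov⟩
  · have hX' : (X ∪ Y).filter (· < a) = X := by
      ext z
      simp only [Finset.mem_filter, Finset.mem_union]
      exact ⟨fun ⟨hz, hza⟩ => hz.resolve_right fun hzY => (hY z hzY).1.not_gt hza,
        fun hz => ⟨Or.inl hz, hX z hz⟩⟩
    obtain ⟨Yt, hYt, hXYt, hcov⟩ := h (X ∪ Y) (fun z hz => (Finset.mem_union.1 hz).elim
      (fun hzX => (hX z hzX).trans_le hab) fun hzY => (hY z hzY).2) hcl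
    rw [hX'] at hcov
    exact ⟨Yt, hYt, fun x hx => hXYt x (Finset.mem_union_left _ hx) (hX x hx), hcov⟩

lemma le1_refl (a : Ordinal) : le1 a a :=
  (le1_iff_coversBelow hle1).2 ⟨le_rfl, fun Z hZ _ => ⟨∅, by simp, by simp, by
    rw [Finset.union_empty, Finset.filter_true_of_mem hZ]; exact .refl _⟩⟩

lemma le1_of_le_of_le (hab : le1 a b) (hac : a ≤ c) (hcb : c ≤ b) : le1 a c := by
  rw [le1_iff_coversBelow hle1] at hab ⊢
  exact ⟨hac, fun Z hZ => hab.2 Z fun z hz => (hZ z hz).trans_le hcb⟩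

lemma le1_trans (hρ : ρ ≠ 0) (hab : le1 a b) (hbc : le1 b c) : le1 a c := by
  rw [le1_iff_coversBelow hle1] at hab hbc ⊢
  refine ⟨hab.1.trans hbc.1, fun Z hZ hcl => ?_⟩
  obtain ⟨Yt₂, hYt₂, hZYt₂, hcov₂⟩ := hbc.2 Z hZ hcl
  obtain ⟨Yt₁, hYt₁, hZYt₁, hcov₁⟩ := hab.2 (Z.filter (· < b) ∪ Yt₂)
    (fun z hz => (Finset.mem_union.1 hz).elim (fun h => (Finset.mem_filter.1 h).2) (hYt₂ z))
    (hcov₂.rclosed hρ hcl)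
  have hfilter : (Z.filter (· < b) ∪ Yt₂).filter (· < a) ∪ Yt₁ =
      Z.filter (· < a) ∪ (Yt₂.filter (· < a) ∪ Yt₁) := by
    rw [Finset.filter_union, Finset.filter_filter, ← Finset.union_assoc]
    congr 3
    ext z
    exact and_iff_right_of_imp fun hz => hz.trans_le hab.1
  refine ⟨Yt₂.filter (· < a) ∪ Yt₁, fun y hy => ?_, fun x hx hxa y hy => ?_,
    hfilter ▸ hcov₂.trans hcov₁⟩
  · exact (Finset.mem_union.1 hy).elim (fun h => (Finset.mem_filter.1 h).2) (hYt₁ y)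
  · have hxb : x < b := hxa.trans_le hab.1
    rcases Finset.mem_union.1 hy with hy | hy
    · exact hZYt₂ x hx hxb y (Finset.mem_filter.1 hy).1
    · exact hZYt₁ x (Finset.mem_union_left _ (Finset.mem_filter.2 ⟨hx, hxb⟩)) hxa y hy

lemma isGreatest_sSup_le1 (hbdd : BddAbove {δ | le1 a δ}) :
    IsGreatest {δ | le1 a δ} (sSup {δ | le1 a δ}) := by
  refine ⟨(le1_iff_coversBelow hle1).2 ⟨le_csSup hbdd (le1_refl hle1 a), fun Z hZ hcl => ?_⟩,
    fun δ hδ => le_csSup hbdd hδ⟩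
  rcases Z.eq_empty_or_nonempty with rfl | hZne
  · exact ((le1_iff_coversBelow hle1).1 (le1_refl hle1 a)).2 ∅ (by simp) hcl
  · obtain ⟨δ, hδ, hlt⟩ := exists_lt_of_lt_csSup ⟨a, le1_refl hle1 a⟩ (hZ _ (Z.max'_mem hZne))
    exact ((le1_iff_coversBelow hle1).1 hδ).2 Z (fun z hz => (Z.le_max' z hz).trans_lt hlt) hcl

lemma lt_of_le1_of_min1 (h : le1 a b) (hc : Min1 le1 c) (hac : a < c) : b < c :=
  not_le.1 fun hcb => hc a hac (le1_of_le_of_le hle1 h hac.le hcb)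

lemma exists_isEmbed_pair (hab : le1 a b) (hlt : a < b) (hx : x < a)
    (hcl : RClosed ρ {x, a}) :
    ∃ h, IsEmbed ρ {x, a} h ∧ h x = x ∧ x < h a ∧ h a < a := by
  have hfilter : ({x, a} : Finset Ordinal).filter (· < a) = {x} := by
    simp [Finset.filter_insert, Finset.filter_singleton, hx]
  obtain ⟨Yt, hYt, hxYt, h, hh, -, himg⟩ := ((le1_iff_coversBelow hle1).1 hab).2 {x, a}
    (by simp [hx.trans hlt, hlt]) (by rwa [Finset.coe_pair])
  rw [hfilter, Finset.coe_pair, image_pair] at himg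
  rw [Finset.coe_pair] at hh
  have hmono : h x < h a := hh.1 _ (by simp) _ (by simp) hx
  have hmem : ∀ z, z ∈ ({h x, h a} : Set Ordinal) ↔ z = x ∨ z ∈ Yt := fun z => by
    rw [himg]
    simp
  have hYt' : ∀ y ∈ Yt, x < y := hxYt x (by simp) hx
  have hfix : h x = x := by
    refine le_antisymm ?_ ?_
    · rcases (hmem x).2 (Or.inl rfl) with h1 | h1
      exacts [h1.ge, hmono.le.trans_eq h1.symm]
    · rcases (hmem (h x)).1 (Or.inl rfl) with h1 | h1
      exacts [h1.ge, (hYt' _ h1).le]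
  rcases (hmem (h a)).1 (Or.inr rfl) with h1 | h1
  · exact absurd (hfix ▸ h1 ▸ hmono) (lt_irrefl _)
  · exact ⟨h, hh, hfix, hYt' _ h1, hYt _ h1⟩

lemma ne_zero_of_le1_of_lt (hab : le1 a b) (hlt : a < b) : a ≠ 0 := by
  rintro rfl
  obtain ⟨Yt, hYt, -, h, -, -, himg⟩ := ((le1_iff_coversBelow hle1).1 hab).2 {0}
    (by simpa using hlt) (RClosed.of_mul_div_mem (by simp))
  have hYt : Yt = ∅ := Finset.eq_empty_of_forall_notMem fun y hy => not_lt_zero (hYt y hy)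
  have : h 0 ∈ h '' ↑({0} : Finset Ordinal) := mem_image_of_mem h (by simp)
  rw [himg, hYt] at this
  simp at this

lemma dvd_of_le1_of_lt (hρ : ρ ≠ 0) (hab : le1 a b) (hlt : a < b) : ρ ∣ a := by
  by_contra hna
  have hx : ρ * (a / ρ) < a := by
    conv_rhs => rw [← div_add_mod a ρ]
    exact lt_add_of_pos_right _ (pos_iff_ne_zero.2 (mt dvd_iff_mod_eq_zero.2 hna))
  obtain ⟨h, hh, hfix, -, hha⟩ := exists_isEmbed_pair hle1 hab hlt hx
    (RClosed.of_mul_div_mem (by simp [mul_div_cancel _ hρ]))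
  have := (hh.2 _ (by simp) a (by simp) (a % ρ) (mod_lt a hρ)).1 fApp_mul_div_mod
  rw [hfix, fApp_mul_div_mod] at this
  exact hha.ne this.symm

lemma mul_omega0_dvd_of_le1_of_lt (hρ : ρ ≠ 0) (hab : le1 a b) (hlt : a < b) :
    ρ * ω ∣ a := by
  obtain ⟨q, rfl⟩ := dvd_of_le1_of_lt hle1 hρ hab hlt
  rcases zero_or_succ_or_isSuccLimit q with rfl | ⟨d, rfl⟩ | hq
  · exact absurd (mul_zero ρ) (ne_zero_of_le1_of_lt hle1 hab hlt)
  · have hpos : 0 < ρ := pos_iff_ne_zero.2 hρ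
    obtain ⟨h, hh, -, hlo, hhi⟩ := exists_isEmbed_pair hle1 hab hlt
      ((mul_lt_mul_iff_right₀ hpos).2 (Order.lt_succ d))
      (RClosed.of_mul_div_mem (by simp [mul_div_cancel _ hρ]))
    obtain ⟨e, he⟩ := (hh.dvd_iff hρ (by simp)).2 (dvd_mul_right ρ (Order.succ d))
    rw [he, mul_lt_mul_iff_right₀ hpos] at hlo hhi
    exact absurd (Order.lt_succ_iff.1 hhi) hlo.not_ge
  · exact mul_dvd_mul_left ρ (isSuccPrelimit_iff_omega0_dvd.1 hq.isSuccPrelimit)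

lemma not_le1_of_lt_of_lt_add (hρ : AddIndec ρ) (hMx : M < x) (hx : x < M + ρ * ω)
    (hxy : x < y) : ¬ le1 x y := fun hle => by
  obtain ⟨η, rfl⟩ : ∃ η, x = M + η := ⟨x - M, (Ordinal.add_sub_cancel_of_le hMx.le).symm⟩
  exact not_dvd_add_of_isPrincipal (isPrincipal_add_mul_omega0 hρ)
    ((lt_add_iff_pos_right M).1 hMx) ((add_lt_add_iff_left M).1 hx)
    (mul_omega0_dvd_of_le1_of_lt hle1 hρ.1 hle hxy)

lemma min1_add (hρ : AddIndec ρ) (hκ : Min1 le1 κ) (hM : IsGreatest {δ | le1 κ δ} M)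
    (h0 : 0 < η) (hη : η < ρ * ω) : Min1 le1 (M + η) := by
  intro x hx hle
  have hκM : κ ≤ M := hM.2 (le1_refl hle1 κ)
  rcases lt_or_ge x κ with hxκ | hκx
  · exact hκ x hxκ (le1_of_le_of_le hle1 hle hxκ.le (hκM.trans le_self_add))
  rcases le_or_gt x M with hxM | hMx
  · have := hM.2 (le1_trans hle1 hρ.1 (le1_of_le_of_le hle1 hM.1 hκx hxM) hle)
    exact (lt_add_of_pos_right M h0).not_ge this
  · exact not_le1_of_lt_of_lt_add hle1 hρ hMx (hx.trans (add_lt_add_right hη M)) hx hle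

end Le1

namespace Enumerates

variable {S : Set Ordinal} {dom : Ordinal → Prop} {f : Ordinal → Ordinal}

lemma strictMonoOn (hf : Enumerates S dom f) : StrictMonoOn f {a | dom a} :=
  fun a _ b hb hab => hf.2.1 a b hb hab

lemma eq_of_forall_lt_iff (hf : Enumerates S dom f) {s β : Ordinal} (hs : s ∈ S)
    (h : ∀ γ, dom γ → (γ < β ↔ f γ < s)) : dom β ∧ f β = s := by
  obtain ⟨b, hb, rfl⟩ := hf.2.2.2 s hs
  rcases lt_trichotomy b β with hbβ | rfl | hβb
  · exact absurd ((h b hb).1 hbβ) (lt_irrefl _)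
  · exact ⟨hb, rfl⟩
  · have hβ : dom β := hf.1 b β hb hβb
    exact absurd ((h β hβ).2 (hf.2.1 β b hb hβb)) (lt_irrefl _)

lemma apply_add_eq (hf : Enumerates S dom f) {α M L : Ordinal} (hα : dom α) (hM : f α ≤ M)
    (hgap : ∀ s ∈ S, f α < s → M < s) (hS : ∀ η, 0 < η → η < L → M + η ∈ S)
    (η : Ordinal) (h0 : 0 < η) (hη : η < L) : dom (α + η) ∧ f (α + η) = M + η := by
  induction η using WellFoundedLT.induction with
  | _ η ih =>
  refine hf.eq_of_forall_lt_iff (hS η h0 hη) fun γ hγ => ⟨fun hlt => ?_, fun hlt => ?_⟩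
  · rcases le_or_gt γ α with hγα | hαγ
    · calc f γ ≤ f α := (hf.strictMonoOn.le_iff_le hγ hα).2 hγα
        _ ≤ M := hM
        _ < M + η := lt_add_of_pos_right M h0
    · obtain ⟨η', rfl⟩ : ∃ η', γ = α + η' :=
        ⟨γ - α, (Ordinal.add_sub_cancel_of_le hαγ.le).symm⟩
      have hη' : η' < η := (add_lt_add_iff_left α).1 hlt
      rw [(ih η' hη' ((lt_add_iff_pos_right α).1 hαγ) (hη'.trans hη)).2]
      exact add_lt_add_right hη' M
  · by_contra hγ'
    have hαγ : α < γ := (lt_add_of_pos_right α h0).trans_le (not_lt.1 hγ')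
    have hMγ : M < f γ := hgap _ (hf.2.2.1 γ hγ) (hf.strictMonoOn hα hγ hαγ)
    obtain ⟨η', hη'⟩ : ∃ η', f γ = M + η' :=
      ⟨f γ - M, (Ordinal.add_sub_cancel_of_le hMγ.le).symm⟩
    have hη'η : η' < η := (add_lt_add_iff_left M).1 (hη' ▸ hlt)
    obtain ⟨hdom', heq⟩ := ih η' hη'η ((lt_add_iff_pos_right M).1 (hη' ▸ hMγ)) (hη'η.trans hη)
    have hγeq : α + η' = γ := hf.strictMonoOn.injOn hdom' hγ (heq.trans hη'.symm)
    exact hγ' (hγeq ▸ add_lt_add_right hη'η α)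

end Enumerates

theorem kappa_add_small_offsets
    (ρ : Ordinal) (hρ : AddIndec ρ)
    (le1 le2 : Ordinal → Ordinal → Prop) (hsys : R2System ρ le1 le2)
    (dom : Ordinal → Prop) (κ : Ordinal → Ordinal)
    (henum : Enumerates {x | Min1 le1 x} dom κ)
    (α ξ : Ordinal) (hα : dom (α + 1)) (hξ0 : 0 < ξ) (hξ : ξ < ρ * ω) :
    dom (α + ξ) ∧
    (∃ m : Ordinal, IsGreatest {δ | le1 (κ α) δ} m ∧ κ (α + ξ) = m + ξ) ∧
    IsGreatest {δ | le1 (κ (α + ξ)) δ} (κ (α + ξ)) := by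
  have hle1 := hsys.1
  have hdomα : dom α := henum.1 _ _ hα (lt_add_one α)
  have hmin : Min1 le1 (κ α) := henum.2.2.1 α hdomα
  set M := sSup {δ | le1 (κ α) δ}
  have hM : IsGreatest {δ | le1 (κ α) δ} M :=
    isGreatest_sSup_le1 hle1 ⟨κ (α + 1), fun δ hδ => (lt_of_le1_of_min1 hle1 hδ
      (henum.2.2.1 _ hα) (henum.2.1 _ _ hα (lt_add_one α))).le⟩
  obtain ⟨hdom, hκξ⟩ := henum.apply_add_eq hdomα (hM.2 (le1_refl hle1 _))
    (fun s hs hαs => lt_of_le1_of_min1 hle1 hM.1 hs hαs)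
    (fun η h0 hη => min1_add hle1 hρ hmin hM h0 hη) ξ hξ0 hξ
  refine ⟨hdom, ⟨M, hM, hκξ⟩, le1_refl hle1 _, fun δ hδ => not_lt.1 fun hlt => ?_⟩
  rw [hκξ] at hδ hlt
  exact not_le1_of_lt_of_lt_add hle1 hρ (lt_add_of_pos_right M hξ0)
    (add_lt_add_right hξ M) hlt hδ
end

section
/- The class of ≤₁-minimal ordinals is topologically closed: if λ is a limit point of the class of ≤₁-minimal ordinals, then λ is ≤₁-minimal. -/
open Ordinal Set

theorem min1_class_topclosed
    (ρ : Ordinal) (hρ : AddIndec ρ)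
    (le1 le2 : Ordinal → Ordinal → Prop) (hsys : R2System ρ le1 le2)
    :
    TopClosed {x | Min1 le1 x} := by
  intro l hl
  intro ξ hξl hle1
  obtain ⟨δ, hδmin, hξδ, hδl⟩ := hl.2 ξ hξl
  have hdef : Le1Def ρ le1 le2 ξ l := (hsys.1 ξ l).mp hle1
  have : le1 ξ δ := by
    refine (hsys.1 ξ δ).mpr ⟨le_of_lt hξδ, ?_⟩
    intro X Y hX hY hcl
    exact hdef.2 X Y hX (fun y hy => ⟨(hY y hy).1, lt_trans (hY y hy).2 hδl⟩) hcl
  exact hδmin ξ hξδ this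
end

section
/- Let X be a closed set of ordinals and let h : X → Ord be an embedding. If α is the least element of X with h(α) ≠ α, then α is divisible by ρ. -/
open Ordinal Set

theorem least_moved_divisible
    (ρ : Ordinal) (hρ : AddIndec ρ)
    (X : Set Ordinal) (hX : RClosed ρ X)
    (h : Ordinal → Ordinal) (hemb : IsEmbed ρ X h)
    (α : Ordinal) (hmem : α ∈ X) (hmoved : h α ≠ α)
    (hleast : ∀ b ∈ X, h b ≠ b → α ≤ b) :
    DivBy ρ α := by
  by_cases hε : α % ρ = 0
  · exact ⟨α / ρ, by conv_lhs => rw [← Ordinal.div_add_mod α ρ, hε, add_zero]⟩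
  exfalso
  set σ := ρ * (α / ρ) with hσdef
  have hσα : σ + α % ρ = α := Ordinal.div_add_mod α ρ
  have hmodlt : α % ρ < ρ := Ordinal.mod_lt α hρ.1
  have hσlt : σ < α := by
    conv_rhs => rw [← hσα]
    simpa [pos_iff_ne_zero] using hε
  have hσX : σ ∈ X := hX σ (α % ρ) ⟨α / ρ, rfl⟩ hmodlt (by rw [hσα]; exact hmem)
  have hσfix : h σ = σ := by
    by_contra hne
    exact absurd (hleast σ hσX hne) (not_le.2 hσlt)
  have hmod0 : σ % ρ = 0 := Ordinal.mul_mod _ _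
  have hf : fApp ρ (α % ρ) σ = α := by
    rw [fApp, if_pos hmod0, hσα]
  have := (hemb.2 σ hσX α hmem (α % ρ) hmodlt).1 hf
  rw [hσfix, fApp, if_pos hmod0, hσα] at this
  exact hmoved this.symm
end
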